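/- arXiv:1209.2088 — 3 statements merged into one kernel-verified Lean document; each statement's English description precedes it below -/
import Mathlib

section
/- For every n ≥ 2 and every p ∈ (0,1], the expected number of vertices other than v_1 that are reachable from v_1 in the ordered directed random graph is at most p·(e^{p(n+1)} − 1)/(e^p − 1). -/
/-!
Reachability from `v_1` is bounded path by path. A path from `v_1` to `v_j` is determined by
its set `S` of interior vertices, a subset of `{v_2, …, v_{j-1}}`, and is present with probability
`p ^ (#S + 1)` because its edges are distinct. Summing over `S` gives
`P(v_j reachable) ≤ p (1 + p) ^ (j - 2)`, and summing over `j`, with `1 + p ≤ e ^ p` and the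
geometric series, gives the bound.
-/

open MeasureTheory Filter

/-- The Bernoulli measure on `Bool` with success probability `p` (clamped to `[0,1]`). -/
noncomputable def bernMeasure (p : ℝ) : Measure Bool :=
  (min (ENNReal.ofReal p) 1) • Measure.dirac true +
    (1 - min (ENNReal.ofReal p) 1) • Measure.dirac false

instance (p : ℝ) : IsProbabilityMeasure (bernMeasure p) := by
  constructor
  simp [bernMeasure]

/-- The ordered directed random graph on `n` vertices `v_1, …, v_n` (0-indexed as `0, …, n-1`):
each entry `ω a b` (for `a < b`, the only relevant ones) is an independent Bernoulli(p)
indicator of the presence of the directed edge from vertex `a` to vertex `b`. -/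
noncomputable def graphMeasure (n : ℕ) (p : ℝ) : Measure (Fin n → Fin n → Bool) :=
  Measure.pi fun _ => Measure.pi fun _ => bernMeasure p

/-- The directed edge relation of the graph `ω` : an edge from `a` to `b` (vertices named
`0, …, n-1`, with vertex `k` standing for `v_{k+1}`) exists iff `a < b` and the
corresponding coordinate is `true`. -/
def EdgeRel (n : ℕ) (ω : Fin n → Fin n → Bool) (a b : ℕ) : Prop :=
  ∃ (ha : a < n) (hb : b < n), a < b ∧ ω ⟨a, ha⟩ ⟨b, hb⟩ = true

/-- Vertex `j` (i.e. `v_{j+1}`) is reachable from vertex `0` (i.e. `v_1`) by a directed path. -/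
def Reachable (n : ℕ) (ω : Fin n → Fin n → Bool) (j : ℕ) : Prop :=
  Relation.ReflTransGen (EdgeRel n ω) 0 j

-- `RSet n ω` is `R`, the set of vertices reachable from `v_1` (including `v_1`).
open Classical in
noncomputable def RSet (n : ℕ) (ω : Fin n → Fin n → Bool) : Finset ℕ :=
  (Finset.range n).filter fun j => Reachable n ω j

open Finset

namespace Finset

variable {α : Type*} [LinearOrder α] [OrderBot α]

/-- The predecessor of `b` on the path whose vertices are `⊥`, the elements of `S`, and `b`. -/
def supBelow (S : Finset α) (b : α) : α := (S.filter (· < b)).sup id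

lemma supBelow_erase_bot (S : Finset α) (b : α) : (S.erase ⊥).supBelow b = S.supBelow b := by
  rw [supBelow, filter_erase, sup_erase_bot, supBelow]

lemma supBelow_insert_of_le (S : Finset α) {a b : α} (h : b ≤ a) :
    (insert a S).supBelow b = S.supBelow b := by
  rw [supBelow, filter_insert, if_neg (not_lt.2 h), supBelow]

lemma supBelow_of_forall_lt {S : Finset α} {b : α} (h : ∀ x ∈ S, x < b) :
    S.supBelow b = S.sup id := by
  rw [supBelow, filter_true_of_mem h]

end Finset

theorem Relation.ReflTransGen.exists_subset_Ioo_forall_supBelow {α : Type*} [LinearOrder α]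
    [OrderBot α] [LocallyFiniteOrder α] {r : α → α → Prop} (hr : ∀ a b, r a b → a < b) {j : α}
    (h : Relation.ReflTransGen r ⊥ j) :
    ∃ S ⊆ Ioo ⊥ j, ∀ b ∈ insert j S, b ≠ ⊥ → r (S.supBelow b) b := by
  induction h with
  | refl => exact ⟨∅, empty_subset _, by simp⟩
  | @tail b c _ hbc ih =>
    obtain ⟨S, hS, hpath⟩ := ih
    have hle : ∀ x ∈ insert b S, x ≤ b := by
      simp only [mem_insert, forall_eq_or_imp, le_refl, true_and]
      exact fun x hx => (mem_Ioo.1 (hS hx)).2.le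
    -- `b` becomes an interior vertex unless it is the start `⊥`
    refine ⟨(insert b S).erase ⊥, fun x hx => ?_, fun x hx hx_ne => ?_⟩
    · obtain ⟨hx_ne, hx⟩ := mem_erase.1 hx
      exact mem_Ioo.2 ⟨bot_lt_iff_ne_bot.2 hx_ne, (hle x hx).trans_lt (hr _ _ hbc)⟩
    rw [supBelow_erase_bot]
    rcases mem_insert.1 hx with rfl | hx
    · rwa [supBelow_of_forall_lt fun y hy => (hle y hy).trans_lt (hr _ _ hbc), sup_insert, id_eq,
        sup_eq_left.2 (Finset.sup_le (f := id) fun y hy => hle y (mem_insert_of_mem hy))]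
    · rw [supBelow_insert_of_le _ (hle x (mem_of_mem_erase hx))]
      exact hpath x (mem_of_mem_erase hx) hx_ne

lemma integral_card_filter {ι Ω : Type*} [MeasurableSpace Ω] (μ : Measure Ω) [IsFiniteMeasure μ]
    (s : Finset ι) (P : ι → Ω → Prop) [∀ i ω, Decidable (P i ω)]
    (hP : ∀ i, MeasurableSet {ω | P i ω}) :
    ∫ ω, (#(s.filter (P · ω)) : ℝ) ∂μ = ∑ i ∈ s, μ.real {ω | P i ω} := by
  have hind (i : ι) (ω : Ω) : (if P i ω then (1 : ℝ) else 0) = {ω | P i ω}.indicator 1 ω := by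
    simp [Set.indicator_apply]
  simp_rw [card_filter, Nat.cast_sum, Nat.cast_ite, Nat.cast_one, Nat.cast_zero, hind]
  rw [integral_finsetSum _ fun i _ => (integrable_const 1).indicator (hP i)]
  simp_rw [integral_indicator_one (hP _)]

lemma bernMeasure_true (p : ℝ) : bernMeasure p {true} = min (ENNReal.ofReal p) 1 := by
  simp [bernMeasure]

instance (n : ℕ) (p : ℝ) : IsProbabilityMeasure (graphMeasure n p) := by
  unfold graphMeasure
  infer_instance

/-- The edges `(f b, b)` are distinct, so their presence events are independent. -/
lemma graphMeasure_setOf_forall_edge (n : ℕ) (p : ℝ) (B : Finset (Fin n)) (f : Fin n → Fin n) :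
    graphMeasure n p {ω | ∀ b ∈ B, ω (f b) b = true} = bernMeasure p {true} ^ #B := by
  classical
  have hpi : {ω : Fin n → Fin n → Bool | ∀ b ∈ B, ω (f b) b = true} = Set.univ.pi fun a =>
      Set.univ.pi fun b => if b ∈ B ∧ f b = a then {true} else Set.univ := by
    ext ω
    simp only [Set.mem_ofPred_eq, Set.mem_pi, Set.mem_univ, true_implies]
    constructor
    · intro h a b
      split_ifs with hb
      exacts [hb.2 ▸ h b hb.1, trivial]
    · intro h b hb
      simpa [hb] using h (f b) b
  simp_rw [hpi, graphMeasure, Measure.pi_pi, apply_ite (bernMeasure p), measure_univ]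
  rw [Finset.prod_comm]
  simp_rw [ite_and, prod_ite_irrel, prod_ite_eq, mem_univ, if_true, prod_const_one, prod_ite_mem,
    univ_inter, prod_const]

lemma reflTransGen_of_reachable {n : ℕ} [NeZero n] {ω : Fin n → Fin n → Bool} {j : ℕ}
    (h : Reachable n ω j) (hj : j < n) :
    Relation.ReflTransGen (fun a b : Fin n => a < b ∧ ω a b = true) ⊥ ⟨j, hj⟩ := by
  induction h with
  | refl => exact .refl
  | tail _ hedge ih =>
    obtain ⟨ha, hb, hlt, hω⟩ := hedge
    exact (ih ha).tail ⟨hlt, hω⟩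

lemma graphMeasure_reflTransGen_le {n : ℕ} [NeZero n] (p : ℝ) {j : Fin n} (hj : ⊥ < j) :
    graphMeasure n p {ω | Relation.ReflTransGen (fun a b => a < b ∧ ω a b = true) ⊥ j} ≤
      bernMeasure p {true} * (1 + bernMeasure p {true}) ^ #(Ioo ⊥ j) := by
  set q := bernMeasure p {true}
  let pathEvent (S : Finset (Fin n)) : Set (Fin n → Fin n → Bool) :=
    {ω | ∀ b ∈ insert j S, ω (S.supBelow b) b = true}
  have hcover : {ω | Relation.ReflTransGen (fun a b => a < b ∧ ω a b = true) ⊥ j} ⊆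
      ⋃ S ∈ (Ioo ⊥ j).powerset, pathEvent S := by
    intro ω hω
    obtain ⟨S, hS, hpath⟩ := hω.exists_subset_Ioo_forall_supBelow fun _ _ h => h.1
    refine Set.mem_biUnion (mem_powerset.2 hS) fun b hb => (hpath b hb ?_).2
    rcases mem_insert.1 hb with rfl | hb
    exacts [hj.ne', (mem_Ioo.1 (hS hb)).1.ne']
  calc _ ≤ graphMeasure n p (⋃ S ∈ (Ioo ⊥ j).powerset, pathEvent S) := measure_mono hcover
    _ ≤ ∑ S ∈ (Ioo ⊥ j).powerset, graphMeasure n p (pathEvent S) :=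
        measure_biUnion_finset_le _ _
    _ = ∑ S ∈ (Ioo ⊥ j).powerset, q ^ #S * 1 ^ (#(Ioo ⊥ j) - #S) * q := by
        refine sum_congr rfl fun S hS => ?_
        have hjS : j ∉ S := fun h => (mem_Ioo.1 (mem_powerset.1 hS h)).2.false
        rw [graphMeasure_setOf_forall_edge, card_insert_of_notMem hjS, pow_succ, one_pow, mul_one]
    _ = q * (1 + q) ^ #(Ioo ⊥ j) := by
        rw [← sum_mul, sum_pow_mul_eq_add_pow, mul_comm, add_comm]

lemma measureReal_reachable_le {n : ℕ} {p : ℝ} (hp : 0 ≤ p) {j : ℕ} (hj0 : j ≠ 0)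
    (hjn : j < n) : (graphMeasure n p).real {ω | Reachable n ω j} ≤ p * (1 + p) ^ (j - 1) := by
  have : NeZero n := ⟨by omega⟩
  have hq : bernMeasure p {true} ≤ ENNReal.ofReal p := bernMeasure_true p ▸ min_le_left _ _
  refine ENNReal.toReal_le_of_le_ofReal (by positivity) ?_
  calc graphMeasure n p {ω | Reachable n ω j}
      ≤ graphMeasure n p
          {ω | Relation.ReflTransGen (fun a b => a < b ∧ ω a b = true) ⊥ ⟨j, hjn⟩} :=
        measure_mono fun ω hω => reflTransGen_of_reachable hω hjn
    _ ≤ bernMeasure p {true} * (1 + bernMeasure p {true}) ^ #(Ioo ⊥ (⟨j, hjn⟩ : Fin n)) :=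
        graphMeasure_reflTransGen_le p (bot_lt_iff_ne_bot.2 (Fin.ne_of_val_ne hj0))
    _ ≤ ENNReal.ofReal p * (1 + ENNReal.ofReal p) ^ (j - 1) := by
        rw [Fin.card_Ioo, bot_eq_zero, Fin.val_zero, Nat.sub_zero]
        gcongr
    _ = ENNReal.ofReal (p * (1 + p) ^ (j - 1)) := by
        rw [ENNReal.ofReal_mul hp, ENNReal.ofReal_pow (by positivity),
          ENNReal.ofReal_add zero_le_one hp, ENNReal.ofReal_one]

lemma one_add_pow_pred_le_exp_pow {p : ℝ} (hp : 0 ≤ p) (j : ℕ) :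
    (1 + p) ^ (j - 1) ≤ Real.exp p ^ j :=
  calc (1 + p) ^ (j - 1) ≤ (1 + p) ^ j := pow_le_pow_right₀ (by linarith) (Nat.sub_le j 1)
    _ ≤ Real.exp p ^ j := by gcongr; linarith [Real.add_one_le_exp p]

theorem expected_reachable_le_general (n : ℕ) (p : ℝ) (hp0 : 0 < p) :
    (∫ ω, (((RSet n ω).erase 0).card : ℝ) ∂(graphMeasure n p)) ≤
      p * (Real.exp (p * (n + 1)) - 1) / (Real.exp p - 1) := by
  classical
  calc ∫ ω, (((RSet n ω).erase 0).card : ℝ) ∂(graphMeasure n p)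
      = ∑ j ∈ (range n).erase 0, (graphMeasure n p).real {ω | Reachable n ω j} := by
        rw [← integral_card_filter _ _ _ fun _ => (Set.to_countable _).measurableSet]
        simp only [RSet, filter_erase]
    _ ≤ ∑ j ∈ (range n).erase 0, p * (1 + p) ^ (j - 1) := sum_le_sum fun j hj =>
        measureReal_reachable_le hp0.le (ne_of_mem_erase hj) (mem_range.1 (mem_of_mem_erase hj))
    _ ≤ ∑ j ∈ range (n + 1), p * Real.exp p ^ j :=
        (sum_le_sum fun j _ => by gcongr; exact one_add_pow_pred_le_exp_pow hp0.le j).trans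
          (sum_le_sum_of_subset_of_nonneg
            ((erase_subset _ _).trans (range_subset_range.2 n.le_succ)) fun _ _ _ => by positivity)
    _ = p * (Real.exp (p * (n + 1)) - 1) / (Real.exp p - 1) := by
        rw [← mul_sum, geom_sum_eq (Real.one_lt_exp_iff.2 hp0).ne', ← Real.exp_nat_mul]
        push_cast
        ring_nf

/-- For every `n ≥ 2` and every `p ∈ (0,1]`, the expected number of
vertices other than `v_1` that are reachable from `v_1` is at most
`p·(e^{p(n+1)} − 1)/(e^p − 1)`. -/
theorem expected_reachable_le (n : ℕ) (hn : 2 ≤ n) (p : ℝ) (hp0 : 0 < p) (hp1 : p ≤ 1) :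
    (∫ ω, (((RSet n ω).erase 0).card : ℝ) ∂(graphMeasure n p)) ≤
      p * (Real.exp (p * (n + 1)) - 1) / (Real.exp p - 1) :=
  expected_reachable_le_general n p hp0
end

section
/- Suppose p = p(n) = c·(log n)/n + ξ(n) where ξ(n) = o((log n)/n) and 0 < c < 1 is fixed, and let t = t(n) = ⌊n^{c}·exp(−n·|ξ(n)| − log log n)⌋. Then the probability that X_t < n tends to 1 as n → ∞; consequently, the set of vertices among v_1, …, v_n reachable from v_1 has size at least t = n^{c+o(1)} asymptotically almost surely. -/
open MeasureTheory ProbabilityTheory Filter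

/-- `IsInfOrderedRandomGraph μ edge p` says that, on the probability space `(Ω, μ)`, the
family `edge` of Boolean random variables models the infinite ordered directed random graph
with edge probability `p`: vertices are `0, 1, 2, …` (vertex `k` standing for `v_{k+1}`),
and for each pair `a < b` the indicator `edge a b` of the presence of the directed edge
from `a` to `b` takes the value `true` with probability `p`, these indicators (for the
pairs `a < b`) forming a mutually independent family. -/
structure IsInfOrderedRandomGraph {Ω : Type*} [MeasurableSpace Ω] (μ : Measure Ω)
    (edge : ℕ → ℕ → Ω → Bool) (p : ℝ) : Prop where
  isProb : IsProbabilityMeasure μ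
  meas : ∀ a b : ℕ, Measurable (edge a b)
  indep : iIndepFun
      (fun (e : {q : ℕ × ℕ // q.1 < q.2}) ω => edge e.1.1 e.1.2 ω) μ
  marginal : ∀ a b : ℕ, a < b → μ {ω | edge a b ω = true} = ENNReal.ofReal p

/-- Vertex `j` (i.e. `v_{j+1}`) is reachable from vertex `0` (i.e. `v_1`) by a directed
path along present edges with strictly increasing indices. -/
def ReachableI {Ω : Type*} (edge : ℕ → ℕ → Ω → Bool) (ω : Ω) (j : ℕ) : Prop :=
  Relation.ReflTransGen (fun a b => a < b ∧ edge a b ω = true) 0 j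

/-- `Xr edge ω i` is `X_i`: for `i ≥ 1`, the (1-based) index of the `i`-th reachable vertex
other than `v_1` (in increasing order of index), and `X_0 = 1` (the index of `v_1`).
Vertex `j` has 1-based index `j + 1`. -/
noncomputable def Xr {Ω : Type*} (edge : ℕ → ℕ → Ω → Bool) (ω : Ω) : ℕ → ℕ
  | 0 => 1
  | i + 1 => Nat.nth (fun j => 0 < j ∧ ReachableI edge ω j) i + 1

-- `reachCount edge ω n` is the number of vertices among `v_1, …, v_n` (including `v_1`)
-- reachable from `v_1`.
open Classical in
noncomputable def reachCount {Ω : Type*} (edge : ℕ → ℕ → Ω → Bool) (ω : Ω) (n : ℕ) : ℕ :=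
  ((Finset.range n).filter fun j => ReachableI edge ω j).card

/-!
Let `R m` be the number of vertices below `m` reachable from `v_1`. Given the reachable set
below `m`, vertex `m` is reachable with probability `1 - (1 - p) ^ R m`, independently of the
edges below `m`; so the gaps between consecutive reachable vertices behave like independent
geometric variables with failure probabilities `(1 - p) ^ r`. A Chernoff bound with parameter
`z = 1 + p / 2`, run as a potential `∑ₖ P(R m = k + 1) ⬝ ∏_{k < j ≤ t} 𝔼 z ^ G_j` that shrinks
by a factor `z` per vertex, gives `P(R (m + 1) ≤ t) ≤ z ^ (t - m) ⬝ exp ((1 + log t) / 2 + 1)`.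
The choice of `t` makes `n p ≥ log t + log log n`, so for `m ≈ n` this is `O((log n)^(-1/2))`.
Finally `X_t < n` as soon as `R (n - 1) > t`, and `log t / log n → c` because
`log t = c log n - o(log n)`.
-/

namespace OrderedRandomGraph

open Real Asymptotics Topology

variable {Ω : Type*} {edge : ℕ → ℕ → Ω → Bool}

/-! ### Reachability -/

theorem reachableI_zero (ω : Ω) : ReachableI edge ω 0 := Relation.ReflTransGen.refl

theorem reachableI_iff {ω : Ω} {j : ℕ} :
    ReachableI edge ω j ↔ j = 0 ∨ ∃ a < j, ReachableI edge ω a ∧ edge a j ω = true := by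
  refine ⟨fun h => ?_, ?_⟩
  · rcases Relation.ReflTransGen.cases_tail h with h0 | ⟨a, ha, hlt, he⟩
    · exact Or.inl h0
    · exact Or.inr ⟨a, hlt, ha, he⟩
  · rintro (rfl | ⟨a, hlt, ha, he⟩)
    · exact reachableI_zero ω
    · exact ha.tail ⟨hlt, he⟩

theorem reachableI_congr {ω ω' : Ω} {m : ℕ}
    (h : ∀ a b, a < b → b < m → edge a b ω = edge a b ω') {j : ℕ} (hj : j < m) :
    ReachableI edge ω j ↔ ReachableI edge ω' j := by
  induction j using Nat.strong_induction_on with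
  | _ j ih =>
    rw [reachableI_iff, reachableI_iff]
    refine or_congr Iff.rfl (exists_congr fun a => and_congr_right fun ha => ?_)
    rw [ih a ha (ha.trans hj), h a j ha hj]

theorem measurableSet_reachableI [MeasurableSpace Ω] (hmeas : ∀ a b, Measurable (edge a b))
    (j : ℕ) : MeasurableSet {ω | ReachableI edge ω j} := by
  induction j using Nat.strong_induction_on with
  | _ j ih =>
    have hset : {ω | ReachableI edge ω j} =
        {_ω | j = 0} ∪ ⋃ a < j, {ω | ReachableI edge ω a} ∩ edge a j ⁻¹' {true} := by
      ext ω
      simp only [Set.mem_ofPred_eq, Set.mem_union, Set.mem_iUnion, Set.mem_inter_iff,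
        Set.mem_preimage, Set.mem_singleton_iff, exists_prop]
      exact reachableI_iff
    rw [hset]
    exact (MeasurableSet.const _).union <| .biUnion (Set.to_countable _) fun a ha =>
      (ih a ha).inter (hmeas a j (measurableSet_singleton _))

open Classical in
theorem reachCount_succ (ω : Ω) (m : ℕ) :
    reachCount edge ω (m + 1) = reachCount edge ω m + if ReachableI edge ω m then 1 else 0 := by
  rw [reachCount, reachCount, Finset.range_add_one, Finset.filter_insert]
  split_ifs
  · exact Finset.card_insert_of_notMem fun h => by simpa using (Finset.mem_filter.mp h).1
  · rfl

open Classical in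
theorem reachCount_mono (ω : Ω) {m m' : ℕ} (h : m ≤ m') :
    reachCount edge ω m ≤ reachCount edge ω m' :=
  Finset.card_le_card (Finset.filter_subset_filter _ (Finset.range_subset_range.mpr h))

open Classical in
theorem reachCount_pos (ω : Ω) {m : ℕ} (hm : 1 ≤ m) : 0 < reachCount edge ω m :=
  Finset.card_pos.mpr
    ⟨0, Finset.mem_filter.mpr ⟨Finset.mem_range.mpr hm, reachableI_zero ω⟩⟩

theorem reachCount_one (ω : Ω) : reachCount edge ω 1 = 1 := by
  rw [← zero_add 1, reachCount_succ, if_pos (reachableI_zero ω)]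
  rfl

open Classical in
theorem reachCount_le_count_add_one (ω : Ω) (m : ℕ) :
    reachCount edge ω m ≤ Nat.count (fun j => 0 < j ∧ ReachableI edge ω j) m + 1 := by
  rw [Nat.count_eq_card_filter_range, reachCount]
  refine (Finset.card_le_card fun j hj => ?_).trans (Finset.card_insert_le 0 _)
  rw [Finset.mem_filter] at hj
  rcases Nat.eq_zero_or_pos j with rfl | hj0
  · exact Finset.mem_insert_self 0 _
  · exact Finset.mem_insert_of_mem (Finset.mem_filter.mpr ⟨hj.1, hj0, hj.2⟩)

open Classical in
theorem Xr_le_of_lt_reachCount {ω : Ω} {t m : ℕ} (h : t < reachCount edge ω m) :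
    Xr edge ω t ≤ m := by
  cases t with
  | zero =>
    by_contra! hm
    simp [reachCount, show m = 0 by simpa [Xr] using hm] at h
  | succ k =>
    have := reachCount_le_count_add_one ω m (edge := edge)
    exact Nat.nth_lt_of_lt_count (by omega)

/-! ### Events determined by finitely many edges -/

abbrev OrderedPair := {q : ℕ × ℕ // q.1 < q.2}

def IsDeterminedBy (edge : ℕ → ℕ → Ω → Bool) (S : Finset OrderedPair) (A : Set Ω) :
    Prop :=
  ∀ ω ω', (∀ e ∈ S, edge e.1.1 e.1.2 ω = edge e.1.1 e.1.2 ω') → ω ∈ A → ω' ∈ A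

theorem IsDeterminedBy.preimage_image {S : Finset OrderedPair} {A : Set Ω}
    (hA : IsDeterminedBy edge S A) :
    (fun ω (e : S) => edge e.1.1.1 e.1.1.2 ω) ⁻¹'
      ((fun ω (e : S) => edge e.1.1.1 e.1.1.2 ω) '' A) = A :=
  Set.ext fun ω =>
    ⟨fun ⟨ω', hω', he⟩ => hA ω' ω (fun e he' => congrFun he ⟨e, he'⟩) hω',
      fun hω => ⟨ω, hω, rfl⟩⟩

def column (S : Finset ℕ) (m : ℕ) : Finset OrderedPair :=
  (S.image (·, m)).subtype fun q => q.1 < q.2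

theorem mem_column {S : Finset ℕ} {m : ℕ} {e : OrderedPair} :
    e ∈ column S m ↔ e.1.1 ∈ S ∧ e.1.2 = m := by
  obtain ⟨⟨a, b⟩, hab⟩ := e
  simp [column, eq_comm]

theorem card_column {S : Finset ℕ} {m : ℕ} (hS : ∀ a ∈ S, a < m) :
    (column S m).card = S.card := by
  rw [column, Finset.card_subtype, Finset.filter_true_of_mem (by simpa using hS),
    Finset.card_image_of_injective _ (Prod.mk_left_injective m)]

def lowerPairs (m : ℕ) : Finset OrderedPair :=
  (Finset.range m ×ˢ Finset.range m).subtype fun q => q.1 < q.2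

theorem mem_lowerPairs {m : ℕ} {e : OrderedPair} : e ∈ lowerPairs m ↔ e.1.2 < m := by
  obtain ⟨⟨a, b⟩, hab⟩ := e
  simpa [lowerPairs] using fun h => hab.trans h

theorem disjoint_lowerPairs_column (m : ℕ) (S : Finset ℕ) :
    Disjoint (lowerPairs m) (column S m) :=
  Finset.disjoint_left.mpr fun _ h h' => (mem_lowerPairs.mp h).ne (mem_column.mp h').2

def noEdgeInto (edge : ℕ → ℕ → Ω → Bool) (S : Finset ℕ) (m : ℕ) : Set Ω :=
  {ω | ∀ a ∈ S, edge a m ω = false}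

theorem noEdgeInto_eq_biInter {S : Finset ℕ} {m : ℕ} (hS : ∀ a ∈ S, a < m) :
    noEdgeInto edge S m = ⋂ e ∈ column S m, (fun ω => edge e.1.1 e.1.2 ω) ⁻¹' {false} := by
  ext ω
  simp only [noEdgeInto, Set.mem_ofPred_eq, Set.mem_iInter, Set.mem_preimage,
    Set.mem_singleton_iff]
  refine ⟨fun h e he => ?_,
    fun h a ha => h ⟨(a, m), hS a ha⟩ (mem_column.mpr ⟨ha, rfl⟩)⟩
  obtain ⟨ha, hm⟩ := mem_column.mp he
  exact hm ▸ h _ ha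

theorem isDeterminedBy_noEdgeInto {S : Finset ℕ} {m : ℕ} (hS : ∀ a ∈ S, a < m) :
    IsDeterminedBy edge (column S m) (noEdgeInto edge S m) := fun _ _ h hω a ha =>
  (h ⟨(a, m), hS a ha⟩ (mem_column.mpr ⟨ha, rfl⟩)) ▸ hω a ha

def reachSetEq (edge : ℕ → ℕ → Ω → Bool) (m : ℕ) (S : Finset ℕ) : Set Ω :=
  {ω | ∀ j < m, ReachableI edge ω j ↔ j ∈ S}

theorem isDeterminedBy_reachSetEq (m : ℕ) (S : Finset ℕ) :
    IsDeterminedBy edge (lowerPairs m) (reachSetEq edge m S) := fun _ _ h hω j hj =>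
  (reachableI_congr (fun a b hab hb => h ⟨(a, b), hab⟩ (mem_lowerPairs.mpr hb)) hj).symm.trans
    (hω j hj)

theorem measurableSet_reachSetEq [MeasurableSpace Ω] (hmeas : ∀ a b, Measurable (edge a b))
    (m : ℕ) (S : Finset ℕ) : MeasurableSet (reachSetEq edge m S) :=
  measurableSet_setOfPred.mpr <| Measurable.forall fun j => measurable_const.imp <|
    (measurableSet_setOfPred.mp (measurableSet_reachableI hmeas j)).iff measurable_const

theorem reachSetEq_diff_reachable {m : ℕ} (hm : 1 ≤ m) {S : Finset ℕ}
    (hS : ∀ a ∈ S, a < m) :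
    reachSetEq edge m S \ {ω | ReachableI edge ω m} =
      reachSetEq edge m S ∩ noEdgeInto edge S m := by
  ext ω
  simp only [Set.mem_sdiff, Set.mem_inter_iff, Set.mem_ofPred_eq, noEdgeInto]
  refine and_congr_right fun hω => ?_
  rw [reachableI_iff]
  simp only [Nat.pos_iff_ne_zero.mp hm, false_or, not_exists, not_and, Bool.not_eq_true]
  exact ⟨fun h a ha => h a (hS a ha) ((hω a (hS a ha)).mpr ha),
    fun h a ha hr => h a ((hω a ha).mp hr)⟩

theorem reachSetEq_disjoint {m : ℕ} {S S' : Finset ℕ} (hS : S ⊆ Finset.range m)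
    (hS' : S' ⊆ Finset.range m) (hne : S ≠ S') :
    Disjoint (reachSetEq edge m S) (reachSetEq edge m S') := by
  refine Set.disjoint_left.mpr fun ω h h' => hne (Finset.ext fun j => ?_)
  by_cases hj : j < m
  · rw [← h j hj, h' j hj]
  · exact iff_of_false (fun hjS => hj (Finset.mem_range.mp (hS hjS)))
      (fun hjS => hj (Finset.mem_range.mp (hS' hjS)))

open Classical in
theorem setOf_reachCount_eq (m k : ℕ) :
    {ω | reachCount edge ω m = k} =
      ⋃ S ∈ Finset.powersetCard k (Finset.range m), reachSetEq edge m S := by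
  ext ω
  simp only [Set.mem_ofPred_eq, Set.mem_iUnion, Finset.mem_powersetCard, exists_prop,
    reachSetEq]
  constructor
  · rintro rfl
    exact ⟨_, ⟨Finset.filter_subset _ _, rfl⟩, fun j hj => by simp [hj]⟩
  · rintro ⟨S, ⟨hSm, rfl⟩, hS⟩
    refine congrArg Finset.card (Finset.ext fun j => ?_)
    simp only [Finset.mem_filter, Finset.mem_range]
    exact ⟨fun h => (hS j h.1).mp h.2,
      fun h => ⟨Finset.mem_range.mp (hSm h), (hS j (Finset.mem_range.mp (hSm h))).mpr h⟩⟩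

/-! ### Generating functions of geometric waiting times -/

/-- The probability generating function `s ↦ 𝔼[s ^ G]` of a geometric random variable `G ≥ 1`
with failure probability `q`. -/
noncomputable def geomPGF (q s : ℝ) : ℝ := (1 - q) * s / (1 - q * s)

theorem one_le_geomPGF {q s : ℝ} (hs : 1 ≤ s) (hqs : q * s < 1) :
    1 ≤ geomPGF q s := by
  rw [geomPGF, le_div_iff₀ (by linarith), one_mul]
  nlinarith

theorem mul_geomPGF_add_one_sub {q s : ℝ} (hs : s ≠ 0) (hqs : q * s < 1) :
    q * geomPGF q s + (1 - q) = geomPGF q s / s := by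
  have : 1 - q * s ≠ 0 := by linarith
  rw [geomPGF]
  field_simp
  ring

noncomputable def pgfProd (q z : ℝ) (k t : ℕ) : ℝ :=
  ∏ j ∈ Finset.Ioc k t, geomPGF (q ^ j) z

section Recursion

variable {q z : ℝ}

theorem pow_mul_lt_one (hq0 : 0 ≤ q) (hq1 : q ≤ 1) (hz : 0 ≤ z) (hqz : q * z < 1) {j : ℕ}
    (hj : j ≠ 0) : q ^ j * z < 1 :=
  lt_of_le_of_lt (mul_le_mul_of_nonneg_right (pow_le_of_le_one hq0 hq1 hj) hz) hqz

theorem pgfProd_eq_mul {k t : ℕ} (hkt : k < t) :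
    pgfProd q z k t = geomPGF (q ^ (k + 1)) z * pgfProd q z (k + 1) t := by
  rw [pgfProd, ← Finset.insert_Ioc_add_one_left_eq_Ioc hkt,
    Finset.prod_insert Finset.left_notMem_Ioc, pgfProd]

theorem one_le_pgfProd (hq0 : 0 ≤ q) (hq1 : q ≤ 1) (hz : 1 ≤ z) (hqz : q * z < 1)
    (k t : ℕ) : 1 ≤ pgfProd q z k t :=
  Finset.one_le_prod fun j hj => one_le_geomPGF hz
    (pow_mul_lt_one hq0 hq1 (by linarith) hqz (by linarith [(Finset.mem_Ioc.mp hj).1]))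

variable {g : ℕ → ℕ → ℝ}

/-- Here `g m r` stands for `P(R (m + 1) = r)`. The potential shrinks by the factor `z` because
`q ^ j ⬝ 𝔼 z ^ G_j + (1 - q ^ j) = 𝔼 z ^ G_j / z`. -/
theorem sum_mul_pgfProd_succ_le (hq0 : 0 ≤ q) (hq1 : q ≤ 1) (hz : 1 ≤ z) (hqz : q * z < 1)
    (hg : ∀ r, 0 ≤ g m r)
    (hg_succ : ∀ r, g (m + 1) (r + 1) = q ^ (r + 1) * g m (r + 1) + (1 - q ^ r) * g m r)
    (t : ℕ) :
    ∑ k ∈ Finset.range t, g (m + 1) (k + 1) * pgfProd q z k t ≤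
      (∑ k ∈ Finset.range t, g m (k + 1) * pgfProd q z k t) / z := by
  set Φ := fun k => pgfProd q z k t
  have hshift : ∑ k ∈ Finset.range t, (1 - q ^ k) * g m k * Φ k ≤
      ∑ k ∈ Finset.range t, (1 - q ^ (k + 1)) * g m (k + 1) * Φ (k + 1) := by
    cases t with
    | zero => simp
    | succ t =>
      rw [Finset.sum_range_succ', Finset.sum_range_succ _ t]
      simp only [pow_zero, sub_self, zero_mul, add_zero, le_add_iff_nonneg_right]
      exact mul_nonneg (mul_nonneg (sub_nonneg.mpr (pow_le_one₀ hq0 hq1)) (hg _))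
        (zero_le_one.trans (one_le_pgfProd hq0 hq1 hz hqz _ _))
  calc ∑ k ∈ Finset.range t, g (m + 1) (k + 1) * Φ k
      = ∑ k ∈ Finset.range t, q ^ (k + 1) * g m (k + 1) * Φ k +
          ∑ k ∈ Finset.range t, (1 - q ^ k) * g m k * Φ k := by
        rw [← Finset.sum_add_distrib]
        exact Finset.sum_congr rfl fun k _ => by rw [hg_succ]; ring
    _ ≤ ∑ k ∈ Finset.range t, (q ^ (k + 1) * g m (k + 1) * Φ k +
          (1 - q ^ (k + 1)) * g m (k + 1) * Φ (k + 1)) := by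
        rw [Finset.sum_add_distrib]
        exact add_le_add_right hshift _
    _ = ∑ k ∈ Finset.range t, g m (k + 1) * Φ k / z := by
        refine Finset.sum_congr rfl fun k hk => ?_
        simp only [Φ, pgfProd_eq_mul (Finset.mem_range.mp hk)]
        linear_combination (g m (k + 1) * pgfProd q z (k + 1) t) * mul_geomPGF_add_one_sub
          (by linarith) (pow_mul_lt_one hq0 hq1 (by linarith) hqz (Nat.add_one_ne_zero k))
    _ = _ := by rw [Finset.sum_div]

theorem sum_range_le_pgfProd_div_pow (hq0 : 0 ≤ q) (hq1 : q ≤ 1) (hz : 1 ≤ z)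
    (hqz : q * z < 1) (hg : ∀ m r, 0 ≤ g m r) (hg_zero : ∀ m, g m 0 = 0)
    (hg_init : ∀ r, g 0 r = if r = 1 then 1 else 0)
    (hg_succ : ∀ m r, g (m + 1) (r + 1) = q ^ (r + 1) * g m (r + 1) + (1 - q ^ r) * g m r)
    (t m : ℕ) :
    ∑ r ∈ Finset.range (t + 1), g m r ≤ pgfProd q z 0 t / z ^ m := by
  have hpot :
      ∑ k ∈ Finset.range t, g m (k + 1) * pgfProd q z k t ≤ pgfProd q z 0 t / z ^ m := by
    induction m with
    | zero =>
      simp only [hg_init, add_eq_right, ite_mul, one_mul, zero_mul, Finset.sum_ite_eq',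
        Finset.mem_range, pow_zero, div_one]
      split_ifs
      exacts [le_rfl, zero_le_one.trans (one_le_pgfProd hq0 hq1 hz hqz 0 t)]
    | succ m ih =>
      calc _ ≤ (∑ k ∈ Finset.range t, g m (k + 1) * pgfProd q z k t) / z :=
            sum_mul_pgfProd_succ_le hq0 hq1 hz hqz (hg m) (hg_succ m) t
        _ ≤ pgfProd q z 0 t / z ^ m / z := by gcongr
        _ = _ := by rw [pow_succ, div_div]
  refine le_trans ?_ hpot
  rw [Finset.sum_range_succ', hg_zero, add_zero]
  exact Finset.sum_le_sum fun k _ =>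
    le_mul_of_one_le_right (hg m (k + 1)) (one_le_pgfProd hq0 hq1 hz hqz k t)

end Recursion

theorem sum_Ioc_inv_two_mul_sub_one_le (t : ℕ) :
    ∑ j ∈ Finset.Ioc 0 t, 1 / (2 * (j : ℝ) - 1) ≤ (1 + log t) / 2 + 1 := by
  have hharm : ∑ j ∈ Finset.Ioc 0 t, (j : ℝ)⁻¹ ≤ 1 + log t := by
    have h := harmonic_le_one_add_log t
    rw [harmonic_eq_sum_Icc] at h
    push_cast at h
    rwa [← Finset.Icc_add_one_left_eq_Ioc, zero_add]
  have hsq : ∑ j ∈ Finset.Ioc 0 t, ((j : ℝ) ^ 2)⁻¹ ≤ 2 := by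
    have h := sum_Ioo_inv_sq_le (α := ℝ) 0 (t + 1)
    rwa [Finset.Ioo_add_one_right_eq_Ioc, Nat.cast_zero, zero_add, div_one] at h
  calc ∑ j ∈ Finset.Ioc 0 t, 1 / (2 * (j : ℝ) - 1)
      ≤ ∑ j ∈ Finset.Ioc 0 t, ((j : ℝ)⁻¹ / 2 + ((j : ℝ) ^ 2)⁻¹ / 2) := by
        refine Finset.sum_le_sum fun j hj => ?_
        have hj : (1 : ℝ) ≤ j := by exact_mod_cast (Finset.mem_Ioc.mp hj).1
        rw [div_le_iff₀ (by linarith)]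
        field_simp
        nlinarith
    _ = (∑ j ∈ Finset.Ioc 0 t, (j : ℝ)⁻¹) / 2 +
          (∑ j ∈ Finset.Ioc 0 t, ((j : ℝ) ^ 2)⁻¹) / 2 := by
        rw [Finset.sum_add_distrib, Finset.sum_div, Finset.sum_div]
    _ ≤ (1 + log t) / 2 + 1 := by linarith

theorem pow_mul_one_add_mul_le_one {p : ℝ} (hp0 : 0 ≤ p) (hp1 : p ≤ 1) (j : ℕ) :
    (1 - p) ^ j * (1 + j * p) ≤ 1 :=
  calc (1 - p) ^ j * (1 + j * p) ≤ (1 - p) ^ j * (1 + p) ^ j :=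
        mul_le_mul_of_nonneg_left (one_add_mul_le_pow (by linarith) j)
          (pow_nonneg (by linarith) j)
    _ = (1 - p ^ 2) ^ j := by rw [← mul_pow]; ring
    _ ≤ 1 := pow_le_one₀ (by nlinarith) (by nlinarith)

theorem one_sub_pow_mul_lt_one {p : ℝ} (hp0 : 0 < p) (hp1 : p ≤ 1) {j : ℕ} (hj : 1 ≤ j) :
    (1 - p) ^ j * (1 + p / 2) < 1 :=
  pow_mul_lt_one (by linarith) (by linarith) (by linarith) (by nlinarith) (by omega)

theorem geomPGF_one_sub_pow_le {p : ℝ} (hp0 : 0 < p) (hp1 : p ≤ 1) {j : ℕ} (hj : 1 ≤ j) :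
    geomPGF ((1 - p) ^ j) (1 + p / 2) ≤ (1 + p / 2) * exp (1 / (2 * j - 1)) := by
  set Q := (1 - p) ^ j
  have hQ0 : 0 ≤ Q := pow_nonneg (by linarith) j
  have hd : 0 < 1 - Q * (1 + p / 2) := by linarith [one_sub_pow_mul_lt_one hp0 hp1 hj]
  have hj' : (1 : ℝ) ≤ j := by exact_mod_cast hj
  have hexcess : Q * (p / 2) / (1 - Q * (1 + p / 2)) ≤ 1 / (2 * j - 1) := by
    rw [div_le_div_iff₀ hd (by linarith)]
    nlinarith [pow_mul_one_add_mul_le_one hp0.le hp1 j]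
  calc geomPGF Q (1 + p / 2) = (1 + p / 2) * (1 + Q * (p / 2) / (1 - Q * (1 + p / 2))) := by
        rw [geomPGF, one_add_div hd.ne', mul_div_assoc']
        congr 1
        ring
    _ ≤ (1 + p / 2) * exp (Q * (p / 2) / (1 - Q * (1 + p / 2))) := by
        gcongr
        linarith [Real.add_one_le_exp (Q * (p / 2) / (1 - Q * (1 + p / 2)))]
    _ ≤ (1 + p / 2) * exp (1 / (2 * j - 1)) := by gcongr

theorem pgfProd_one_sub_le {p : ℝ} (hp0 : 0 < p) (hp1 : p ≤ 1) (t : ℕ) :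
    pgfProd (1 - p) (1 + p / 2) 0 t ≤ (1 + p / 2) ^ t * exp ((1 + log t) / 2 + 1) :=
  calc pgfProd (1 - p) (1 + p / 2) 0 t
      ≤ ∏ j ∈ Finset.Ioc 0 t, (1 + p / 2) * exp (1 / (2 * j - 1)) := by
        refine Finset.prod_le_prod (fun j hj => ?_) fun j hj =>
          geomPGF_one_sub_pow_le hp0 hp1 (Finset.mem_Ioc.mp hj).1
        exact zero_le_one.trans (one_le_geomPGF (by linarith)
          (one_sub_pow_mul_lt_one hp0 hp1 (Finset.mem_Ioc.mp hj).1))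
    _ = (1 + p / 2) ^ t * exp (∑ j ∈ Finset.Ioc 0 t, 1 / (2 * (j : ℝ) - 1)) := by
        rw [Finset.prod_mul_distrib, Finset.prod_const, Nat.card_Ioc, Real.exp_sum, Nat.sub_zero]
    _ ≤ (1 + p / 2) ^ t * exp ((1 + log t) / 2 + 1) := by
        gcongr
        exact sum_Ioc_inv_two_mul_sub_one_le t

/-! ### Asymptotics -/

theorem pow_mul_exp_div_pow {z : ℝ} (hz : 0 < z) (t m : ℕ) (a : ℝ) :
    z ^ t * exp a / z ^ m = exp ((t - m) * log z + a) := by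
  rw [← exp_log (pow_pos hz t), ← exp_log (pow_pos hz m), log_pow, log_pow, ← exp_add,
    ← exp_sub]
  ring_nf

theorem chernoff_exponent_le {M t p ℓ : ℝ} (ht : 0 ≤ t) (htM : t ≤ M) (hp0 : 0 < p)
    (hpt : p * (t + 2) ≤ 1) (hpM : p ^ 2 * M ≤ 1) (hlog : log t + ℓ ≤ (M + 2) * p) :
    (t - M) * log (1 + p / 2) + (1 + log t) / 2 + 1 ≤ -ℓ / 2 + 3 := by
  have hlog_z : p / 2 - p ^ 2 / 4 ≤ log (1 + p / 2) := by
    have h := one_sub_inv_le_log_of_pos (by linarith : 0 < 1 + p / 2)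
    have h' : p / 2 - p ^ 2 / 4 ≤ 1 - (1 + p / 2)⁻¹ := by
      rw [inv_eq_one_div, le_sub_iff_add_le, ← le_sub_iff_add_le', div_le_iff₀ (by linarith)]
      nlinarith [sq_nonneg p, mul_pos hp0 (mul_pos hp0 hp0)]
    linarith
  have hgain : (M - t) * (p / 2 - p ^ 2 / 4) ≤ (M - t) * log (1 + p / 2) :=
    mul_le_mul_of_nonneg_left hlog_z (by linarith)
  nlinarith

theorem tendsto_atTop_of_tendsto_log_div {α : Type*} {l : Filter α} {x L : α → ℝ} {c : ℝ}
    (hc : 0 < c) (hL : Tendsto L l atTop) (hx0 : ∀ᶠ a in l, 0 < x a)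
    (hx : Tendsto (fun a => log (x a) / L a) l (𝓝 c)) : Tendsto x l atTop := by
  have hlog : Tendsto (fun a => log (x a)) l atTop := by
    refine (hx.pos_mul_atTop hc hL).congr' ?_
    filter_upwards [hL.eventually_gt_atTop 0] with a ha
    exact div_mul_cancel₀ _ ha.ne'
  refine (tendsto_exp_atTop.comp hlog).congr' ?_
  filter_upwards [hx0] with a ha
  exact exp_log ha

theorem tendsto_log_natFloor_div {α : Type*} {l : Filter α} {x L : α → ℝ} {c : ℝ}
    (hc : 0 < c) (hL : Tendsto L l atTop) (hx0 : ∀ᶠ a in l, 0 < x a)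
    (hx : Tendsto (fun a => log (x a) / L a) l (𝓝 c)) :
    Tendsto (fun a => log ⌊x a⌋₊ / L a) l (𝓝 c) := by
  have hlower : Tendsto (fun a => (log (x a) - log 2) / L a) l (𝓝 c) := by
    simpa [sub_div] using hx.sub (tendsto_const_nhds.div_atTop hL)
  have hfloor : ∀ᶠ a in l,
      0 < L a ∧ log (x a) - log 2 ≤ log ⌊x a⌋₊ ∧ log ⌊x a⌋₊ ≤ log (x a) := by
    filter_upwards [(tendsto_atTop_of_tendsto_log_div hc hL hx0 hx).eventually_ge_atTop 2,
      hL.eventually_gt_atTop 0] with a hxa hLa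
    have hlt : x a - 1 < ⌊x a⌋₊ := by linarith [Nat.lt_floor_add_one (x a)]
    refine ⟨hLa, ?_, log_le_log (by linarith) (Nat.floor_le (by linarith))⟩
    rw [← log_div (by linarith) two_ne_zero]
    exact log_le_log (by linarith) (by linarith)
  refine tendsto_of_tendsto_of_tendsto_of_le_of_le' hlower hx ?_ ?_ <;>
    filter_upwards [hfloor] with a ⟨hLa, hlo, hhi⟩
  exacts [div_le_div_of_nonneg_right hlo hLa.le, div_le_div_of_nonneg_right hhi hLa.le]

theorem eventually_mul_abs_le_of_isLittleO {ξ : ℕ → ℝ}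
    (hξ : ξ =o[atTop] fun n : ℕ => log n / n) {ε : ℝ} (hε : 0 < ε) :
    ∀ᶠ n : ℕ in atTop, n * |ξ n| ≤ ε * log n := by
  filter_upwards [hξ.bound hε, eventually_ge_atTop 1] with n hn hn1
  have hn0 : (0 : ℝ) < n := by exact_mod_cast hn1
  rw [norm_eq_abs, norm_eq_abs, abs_of_nonneg (div_nonneg (log_natCast_nonneg n) hn0.le)] at hn
  calc n * |ξ n| ≤ n * (ε * (log n / n)) := by gcongr
    _ = ε * log n := by field_simp

theorem tendsto_mul_abs_div_log_of_isLittleO {ξ : ℕ → ℝ}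
    (hξ : ξ =o[atTop] fun n : ℕ => log n / n) :
    Tendsto (fun n : ℕ => n * |ξ n| / log n) atTop (𝓝 0) := by
  have h := hξ.tendsto_div_nhds_zero.abs
  rw [abs_zero] at h
  refine h.congr' ?_
  filter_upwards [eventually_ge_atTop 2] with n hn
  have hn0 : (0 : ℝ) < n := by positivity
  have hL0 : 0 < log n := log_pos (by exact_mod_cast hn)
  rw [abs_div, abs_of_pos (div_pos hL0 hn0)]
  field_simp

theorem tendsto_log_natCast_atTop : Tendsto (fun n : ℕ => log (n : ℝ)) atTop atTop :=
  tendsto_log_atTop.comp tendsto_natCast_atTop_atTop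

noncomputable def threshold (c : ℝ) (ξ : ℕ → ℝ) (n : ℕ) : ℝ :=
  (n : ℝ) ^ c * exp (-(n * |ξ n|) - log (log n))

theorem threshold_pos (c : ℝ) (ξ : ℕ → ℝ) {n : ℕ} (hn : 1 ≤ n) :
    0 < threshold c ξ n := by
  unfold threshold
  positivity

theorem tendsto_log_threshold_div_log {c : ℝ} {ξ : ℕ → ℝ}
    (hξ : ξ =o[atTop] fun n : ℕ => log n / n) :
    Tendsto (fun n => log (threshold c ξ n) / log n) atTop (𝓝 c) := by
  have h := ((tendsto_const_nhds (x := c)).sub (tendsto_mul_abs_div_log_of_isLittleO hξ)).sub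
    (isLittleO_log_id_atTop.tendsto_div_nhds_zero.comp tendsto_log_natCast_atTop)
  rw [sub_zero, sub_zero] at h
  refine h.congr' ?_
  filter_upwards [eventually_ge_atTop 2] with n hn
  have hn0 : (0 : ℝ) < n := by positivity
  have hL0 : 0 < log n := log_pos (by exact_mod_cast hn)
  rw [Function.comp_apply, id, threshold, log_mul (by positivity) (exp_pos _).ne', log_rpow hn0,
    log_exp]
  field_simp
  ring

theorem tendsto_threshold_atTop {c : ℝ} (hc : 0 < c) {ξ : ℕ → ℝ}
    (hξ : ξ =o[atTop] fun n : ℕ => log n / n) : Tendsto (threshold c ξ) atTop atTop :=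
  tendsto_atTop_of_tendsto_log_div hc tendsto_log_natCast_atTop
    ((eventually_ge_atTop 1).mono fun _ => threshold_pos c ξ) (tendsto_log_threshold_div_log hξ)

theorem isLittleO_log_mul_rpow_add {c : ℝ} (hc : c < 1) :
    (fun x => 2 * log x * (x ^ c + 2)) =o[atTop] id := by
  have h : (fun x => log x * x ^ c) =o[atTop] id := by
    refine ((isLittleO_log_rpow_atTop (sub_pos.mpr hc)).mul_isBigO
      (isBigO_refl (fun x : ℝ => x ^ c) atTop)).congr' EventuallyEq.rfl ?_
    filter_upwards [eventually_gt_atTop 0] with x hx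
    rw [← rpow_add hx, sub_add_cancel, rpow_one, id]
  exact ((h.const_mul_left 2).add (isLittleO_log_id_atTop.const_mul_left 4)).congr_left
    fun x => by ring

theorem eventually_le_natCast_of_isLittleO {f : ℝ → ℝ} (hf : f =o[atTop] id) :
    ∀ᶠ n : ℕ in atTop, f n ≤ n := by
  filter_upwards [(hf.comp_tendsto tendsto_natCast_atTop_atTop).bound one_pos] with n hn
  simpa using (le_abs_self _).trans hn

theorem tendsto_exp_neg_log_log_div_two :
    Tendsto (fun n : ℕ => ENNReal.ofReal (exp (-log (log n) / 2 + 3))) atTop (𝓝 0) := by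
  have hlog := (tendsto_log_atTop.comp tendsto_log_natCast_atTop).atTop_div_const two_pos
  have h := tendsto_atBot_add_const_right _ 3 (tendsto_neg_atTop_atBot.comp hlog)
  simpa [neg_div] using ENNReal.tendsto_ofReal (tendsto_exp_atBot.comp h)

end OrderedRandomGraph

/-! ### Probability -/

theorem MeasureTheory.measure_inter_eq_ofReal_mul_of_measure_diff {Ω : Type*}
    [MeasurableSpace Ω] {μ : Measure Ω} [IsFiniteMeasure μ] {A B : Set Ω}
    (hB : MeasurableSet B) {q : ℝ} (hq0 : 0 ≤ q) (hq1 : q ≤ 1)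
    (h : μ (A \ B) = ENNReal.ofReal q * μ A) :
    μ (A ∩ B) = ENNReal.ofReal (1 - q) * μ A := by
  have hsplit := measure_inter_add_sdiff (μ := μ) A hB
  have hA : μ A = ENNReal.ofReal (1 - q) * μ A + ENNReal.ofReal q * μ A := by
    rw [← add_mul, ← ENNReal.ofReal_add (by linarith) hq0, sub_add_cancel, ENNReal.ofReal_one,
      one_mul]
  rw [h] at hsplit
  exact (ENNReal.add_left_inj (ENNReal.mul_ne_top ENNReal.ofReal_ne_top
    (measure_ne_top μ A))).mp (hsplit.trans hA)

theorem MeasureTheory.tendsto_measure_of_measure_compl_le {ι : Type*} {l : Filter ι}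
    {Ω : ι → Type*} [∀ i, MeasurableSpace (Ω i)] {μ : ∀ i, Measure (Ω i)}
    [∀ i, IsProbabilityMeasure (μ i)] {s : ∀ i, Set (Ω i)} {b : ι → ENNReal}
    (hb : Tendsto b l (nhds 0)) (h : ∀ᶠ i in l, μ i (s i)ᶜ ≤ b i) :
    Tendsto (fun i => μ i (s i)) l (nhds 1) := by
  have hlow : Tendsto (fun i => 1 - b i) l (nhds 1) := by
    simpa using ENNReal.Tendsto.sub tendsto_const_nhds hb (Or.inl ENNReal.one_ne_top)
  refine tendsto_of_tendsto_of_tendsto_of_le_of_le' hlow tendsto_const_nhds ?_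
    (.of_forall fun i => prob_le_one)
  filter_upwards [h] with i hi
  have hcover : 1 ≤ μ i (s i) + μ i (s i)ᶜ := calc
    1 = μ i (s i ∪ (s i)ᶜ) := by rw [Set.union_compl_self, measure_univ]
    _ ≤ μ i (s i) + μ i (s i)ᶜ := measure_union_le _ _
  exact (tsub_le_tsub_left hi 1).trans (tsub_le_iff_right.mpr hcover)

namespace IsInfOrderedRandomGraph

open OrderedRandomGraph Real

variable {Ω : Type*} [MeasurableSpace Ω] {μ : Measure Ω} {edge : ℕ → ℕ → Ω → Bool} {p : ℝ}

theorem measure_inter_of_disjoint (hG : IsInfOrderedRandomGraph μ edge p)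
    {S T : Finset OrderedPair} (hST : Disjoint S T) {A B : Set Ω}
    (hA : IsDeterminedBy edge S A) (hB : IsDeterminedBy edge T B) :
    μ (A ∩ B) = μ A * μ B := by
  have h := (hG.indep.indepFun_finset S T hST fun _ => hG.meas _ _).measure_inter_preimage_eq_mul
    ((fun ω (e : S) => edge e.1.1.1 e.1.1.2 ω) '' A)
    ((fun ω (e : T) => edge e.1.1.1 e.1.1.2 ω) '' B)
    (Set.toFinite _).measurableSet (Set.toFinite _).measurableSet
  rwa [hA.preimage_image, hB.preimage_image] at h

theorem measure_edge_eq_false (hG : IsInfOrderedRandomGraph μ edge p) (hp0 : 0 ≤ p)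
    {a b : ℕ} (hab : a < b) : μ {ω | edge a b ω = false} = ENNReal.ofReal (1 - p) := by
  have := hG.isProb
  have hcompl : {ω | edge a b ω = false} = {ω | edge a b ω = true}ᶜ := by ext; simp
  rw [hcompl, prob_compl_eq_one_sub (measurableSet_eq_fun (hG.meas a b) measurable_const),
    hG.marginal a b hab, ENNReal.ofReal_sub 1 hp0, ENNReal.ofReal_one]

theorem measure_noEdgeInto (hG : IsInfOrderedRandomGraph μ edge p) (hp0 : 0 ≤ p) (hp1 : p ≤ 1)
    {S : Finset ℕ} {m : ℕ} (hS : ∀ a ∈ S, a < m) :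
    μ (noEdgeInto edge S m) = ENNReal.ofReal ((1 - p) ^ S.card) := by
  rw [noEdgeInto_eq_biInter hS,
    hG.indep.measure_inter_preimage_eq_mul _ fun _ _ => measurableSet_singleton false,
    Finset.prod_congr rfl fun e _ => hG.measure_edge_eq_false hp0 e.2 (a := e.1.1),
    Finset.prod_const,
    card_column hS, ENNReal.ofReal_pow (by linarith)]

theorem measure_reachSetEq_diff_reachable (hG : IsInfOrderedRandomGraph μ edge p)
    (hp0 : 0 ≤ p) (hp1 : p ≤ 1) {m : ℕ} (hm : 1 ≤ m) {S : Finset ℕ}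
    (hS : S ⊆ Finset.range m) :
    μ (reachSetEq edge m S \ {ω | ReachableI edge ω m}) =
      ENNReal.ofReal ((1 - p) ^ S.card) * μ (reachSetEq edge m S) := by
  have hS' : ∀ a ∈ S, a < m := fun a ha => Finset.mem_range.mp (hS ha)
  rw [reachSetEq_diff_reachable hm hS', hG.measure_inter_of_disjoint
    (disjoint_lowerPairs_column m S) (isDeterminedBy_reachSetEq m S)
    (isDeterminedBy_noEdgeInto hS'), hG.measure_noEdgeInto hp0 hp1 hS', mul_comm]

theorem measurableSet_reachCount_eq (hG : IsInfOrderedRandomGraph μ edge p) (m k : ℕ) :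
    MeasurableSet {ω | reachCount edge ω m = k} := by
  rw [setOf_reachCount_eq]
  exact Finset.measurableSet_biUnion _ fun S _ => measurableSet_reachSetEq hG.meas m S

theorem measure_reachCount_eq_diff_reachable (hG : IsInfOrderedRandomGraph μ edge p)
    (hp0 : 0 ≤ p) (hp1 : p ≤ 1) {m : ℕ} (hm : 1 ≤ m) (k : ℕ) :
    μ ({ω | reachCount edge ω m = k} \ {ω | ReachableI edge ω m}) =
      ENNReal.ofReal ((1 - p) ^ k) * μ {ω | reachCount edge ω m = k} := by
  have hdisj : (Finset.powersetCard k (Finset.range m) : Set (Finset ℕ)).PairwiseDisjoint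
      (reachSetEq edge m) := fun S hS S' hS' hne =>
    reachSetEq_disjoint (Finset.mem_powersetCard.mp hS).1 (Finset.mem_powersetCard.mp hS').1 hne
  rw [setOf_reachCount_eq]
  simp_rw [Set.iUnion_sdiff]
  rw [measure_biUnion_finset (hdisj.mono fun S => Set.sdiff_subset)
      fun S _ => (measurableSet_reachSetEq hG.meas m S).diff (measurableSet_reachableI hG.meas m),
    measure_biUnion_finset hdisj fun S _ => measurableSet_reachSetEq hG.meas m S, Finset.mul_sum]
  refine Finset.sum_congr rfl fun S hS => ?_
  rw [hG.measure_reachSetEq_diff_reachable hp0 hp1 hm (Finset.mem_powersetCard.mp hS).1,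
    (Finset.mem_powersetCard.mp hS).2]

theorem measure_reachCount_succ (hG : IsInfOrderedRandomGraph μ edge p)
    (hp0 : 0 ≤ p) (hp1 : p ≤ 1) {m : ℕ} (hm : 1 ≤ m) (r : ℕ) :
    μ {ω | reachCount edge ω (m + 1) = r + 1} =
      ENNReal.ofReal ((1 - p) ^ (r + 1)) * μ {ω | reachCount edge ω m = r + 1} +
        ENNReal.ofReal (1 - (1 - p) ^ r) * μ {ω | reachCount edge ω m = r} := by
  have := hG.isProb
  have hR := measurableSet_reachableI hG.meas m
  have hsplit : {ω | reachCount edge ω (m + 1) = r + 1} =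
      ({ω | reachCount edge ω m = r + 1} \ {ω | ReachableI edge ω m}) ∪
        ({ω | reachCount edge ω m = r} ∩ {ω | ReachableI edge ω m}) := by
    ext ω
    simp only [Set.mem_union, Set.mem_sdiff, Set.mem_inter_iff, Set.mem_ofPred_eq,
      reachCount_succ]
    split_ifs with h <;> simp [h]
  rw [hsplit, measure_union (Set.disjoint_sdiff_left.mono_right Set.inter_subset_right)
      ((hG.measurableSet_reachCount_eq m r).inter hR),
    hG.measure_reachCount_eq_diff_reachable hp0 hp1 hm,
    measure_inter_eq_ofReal_mul_of_measure_diff hR (pow_nonneg (by linarith) r)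
      (pow_le_one₀ (by linarith) (by linarith))
      (hG.measure_reachCount_eq_diff_reachable hp0 hp1 hm r)]

theorem measure_reachCount_le (hG : IsInfOrderedRandomGraph μ edge p) (hp0 : 0 < p)
    (hp1 : p ≤ 1) (t m : ℕ) :
    μ {ω | reachCount edge ω (m + 1) ≤ t} ≤
      ENNReal.ofReal ((1 + p / 2) ^ t * exp ((1 + log t) / 2 + 1) / (1 + p / 2) ^ m) := by
  have := hG.isProb
  set g : ℕ → ℕ → ℝ := fun k r => (μ {ω | reachCount edge ω (k + 1) = r}).toReal
  have hg_zero : ∀ k, g k 0 = 0 := fun k => by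
    simp [g, (reachCount_pos _ (Nat.le_add_left 1 k)).ne']
  have hg_init : ∀ r, g 0 r = if r = 1 then 1 else 0 := fun r => by
    simp only [g, zero_add, reachCount_one]
    split_ifs with hr <;> simp [hr, Ne.symm]
  have hg_succ : ∀ k r, g (k + 1) (r + 1) = (1 - p) ^ (r + 1) * g k (r + 1) +
      (1 - (1 - p) ^ r) * g k r := fun k r => by
    simp only [g]
    rw [hG.measure_reachCount_succ hp0.le hp1 (Nat.le_add_left 1 k), ENNReal.toReal_add
      (by finiteness) (by finiteness), ENNReal.toReal_mul, ENNReal.toReal_mul,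
      ENNReal.toReal_ofReal (pow_nonneg (by linarith) _),
      ENNReal.toReal_ofReal (sub_nonneg.mpr (pow_le_one₀ (by linarith) (by linarith)))]
  have hsum : (μ {ω | reachCount edge ω (m + 1) ≤ t}).toReal =
      ∑ r ∈ Finset.range (t + 1), g m r := by
    have hunion : {ω | reachCount edge ω (m + 1) ≤ t} =
        ⋃ r ∈ Finset.range (t + 1), {ω | reachCount edge ω (m + 1) = r} := by
      ext ω
      simp
    rw [hunion, measure_biUnion_finset (f := fun r => {ω | reachCount edge ω (m + 1) = r})
      (Set.pairwiseDisjoint_fiber _ _) fun r _ => hG.measurableSet_reachCount_eq _ r,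
      ENNReal.toReal_sum (by finiteness)]
  have hbound := sum_range_le_pgfProd_div_pow (q := 1 - p) (z := 1 + p / 2) (g := g)
    (by linarith) (by linarith) (by linarith)
    (by nlinarith) (fun _ _ => ENNReal.toReal_nonneg) hg_zero hg_init hg_succ t m
  rw [← hsum] at hbound
  refine (ENNReal.le_ofReal_iff_toReal_le (by finiteness) ?_).mpr (hbound.trans ?_)
  · positivity
  · gcongr
    exact pgfProd_one_sub_le hp0 hp1 t

theorem measure_reachCount_pred_le (hG : IsInfOrderedRandomGraph μ edge p) {n t : ℕ} {ℓ : ℝ}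
    (htn : t + 2 ≤ n) (hp0 : 0 < p) (hpt : p * (t + 2) ≤ 1) (hpn : p ^ 2 * n ≤ 1)
    (hlog : log t + ℓ ≤ n * p) :
    μ {ω | reachCount edge ω (n - 1) ≤ t} ≤ ENNReal.ofReal (exp (-ℓ / 2 + 3)) := by
  obtain ⟨m, rfl⟩ : ∃ m, n = m + 2 := ⟨n - 2, by omega⟩
  have hp1 : p ≤ 1 := by nlinarith [(Nat.cast_nonneg t : (0 : ℝ) ≤ t)]
  refine (hG.measure_reachCount_le hp0 hp1 t m).trans (ENNReal.ofReal_le_ofReal ?_)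
  rw [pow_mul_exp_div_pow (by linarith)]
  push_cast at htn hpn hlog
  refine exp_le_exp.mpr ?_
  linarith [chernoff_exponent_le (M := m) (Nat.cast_nonneg t) (by exact_mod_cast htn) hp0 hpt
    (by nlinarith) (by linarith)]

theorem measure_reachCount_pred_le_of_threshold (hG : IsInfOrderedRandomGraph μ edge p)
    {n t : ℕ} {c : ℝ} {ξ : ℕ → ℝ} (hc0 : 0 < c) (hc1 : c < 1) (hL : 1 ≤ log n)
    (hp : p = c * log n / n + ξ n) (hξ : n * |ξ n| ≤ c / 2 * log n)
    (hnc : 2 * log n * (n ^ c + 2) ≤ n) (hn : 4 * log n ^ 2 ≤ n)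
    (hx : 1 ≤ threshold c ξ n) (ht : t = ⌊threshold c ξ n⌋₊) :
    μ {ω | reachCount edge ω (n - 1) ≤ t} ≤ ENNReal.ofReal (exp (-log (log n) / 2 + 3)) := by
  have hn0 : (0 : ℝ) < n := Nat.cast_pos.mpr (Nat.pos_of_ne_zero fun h => by norm_num [h] at hL)
  have hxn : threshold c ξ n ≤ n ^ c := mul_le_of_le_one_right (by positivity)
    (exp_le_one_iff.mpr (by nlinarith [log_nonneg hL, abs_nonneg (ξ n)]))
  have hlogx : log (threshold c ξ n) = c * log n - n * |ξ n| - log (log n) := by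
    rw [threshold, log_mul (by positivity) (by positivity), log_rpow hn0, log_exp]
    ring
  have ht1 : (1 : ℝ) ≤ t := by exact_mod_cast ht ▸ Nat.one_le_floor_iff _ |>.mpr hx
  have htx : (t : ℝ) ≤ threshold c ξ n := ht ▸ Nat.floor_le (by linarith)
  set L := log n
  have hnp : n * p = c * L + n * ξ n := by rw [hp]; field_simp
  have hnp_lo : c * L - n * |ξ n| ≤ n * p := by nlinarith [neg_abs_le (ξ n)]
  have hnp_hi : n * p ≤ 2 * L := by nlinarith [le_abs_self (ξ n)]
  have hp0 : 0 < p := by nlinarith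
  have hpt : p * (t + 2) ≤ 1 := by
    refine le_of_mul_le_mul_left ?_ hn0
    calc n * (p * (t + 2)) = n * p * (t + 2) := by ring
      _ ≤ 2 * L * (n ^ c + 2) := by gcongr; linarith
      _ ≤ n * 1 := by linarith
  have htn : t + 2 ≤ n := by
    have : (t : ℝ) + 2 ≤ n := by nlinarith [rpow_nonneg hn0.le c]
    exact_mod_cast this
  have hpn : p ^ 2 * n ≤ 1 := by
    refine le_of_mul_le_mul_left ?_ hn0
    have : (n * p) ^ 2 ≤ (2 * L) ^ 2 := pow_le_pow_left₀ (by positivity) hnp_hi 2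
    nlinarith
  have hlog : log t + log L ≤ n * p := by
    linarith [log_le_log (by linarith) htx]
  exact hG.measure_reachCount_pred_le htn hp0 hpt hpn hlog

theorem eventually_measure_reachCount_pred_le {Ω : ℕ → Type*} [∀ n, MeasurableSpace (Ω n)]
    {μ : ∀ n, Measure (Ω n)} {edge : ∀ n, ℕ → ℕ → Ω n → Bool} {c : ℝ} (hc0 : 0 < c)
    (hc1 : c < 1) {p ξ : ℕ → ℝ} (hξ : ξ =o[atTop] fun n : ℕ => log n / n)
    (hp : ∀ n : ℕ, p n = c * log n / n + ξ n)
    (hG : ∀ n : ℕ, IsInfOrderedRandomGraph (μ n) (edge n) (p n)) {t : ℕ → ℕ}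
    (ht : ∀ n, t n = ⌊threshold c ξ n⌋₊) :
    ∀ᶠ n in atTop, μ n {ω | reachCount (edge n) ω (n - 1) ≤ t n} ≤
      ENNReal.ofReal (exp (-log (log n) / 2 + 3)) := by
  filter_upwards [tendsto_log_natCast_atTop.eventually_ge_atTop 1,
    eventually_mul_abs_le_of_isLittleO hξ (half_pos hc0),
    eventually_le_natCast_of_isLittleO (isLittleO_log_mul_rpow_add hc1),
    eventually_le_natCast_of_isLittleO (isLittleO_pow_log_id_atTop.const_mul_left 4),
    (tendsto_threshold_atTop hc0 hξ).eventually_ge_atTop 1] with n hL hξn hnc hn hx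
  exact (hG n).measure_reachCount_pred_le_of_threshold hc0 hc1 hL (hp n) hξn hnc hn hx (ht n)

end IsInfOrderedRandomGraph

open OrderedRandomGraph IsInfOrderedRandomGraph

open Asymptotics in
/-- Suppose `p n = c·(log n)/n + ξ n` with `ξ = o((log n)/n)` and
`0 < c < 1` fixed, and let `t n = ⌊n^c·exp(−n·|ξ n| − log log n)⌋`.  Then
`P(X_{t n} < n) → 1`; consequently, a.a.s. the set of vertices among `v_1, …, v_n`
reachable from `v_1` has size at least `t n`, where `t n = n^{c+o(1)}`
(i.e. `log (t n) / log n → c`). -/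
theorem X_t_lt_aas_of_lt_one {Ω : ℕ → Type*} [∀ n, MeasurableSpace (Ω n)]
    (μ : ∀ n, Measure (Ω n)) (edge : ∀ n, ℕ → ℕ → Ω n → Bool)
    (c : ℝ) (hc0 : 0 < c) (hc1 : c < 1) (p ξ : ℕ → ℝ)
    (hξ : ξ =o[atTop] fun n : ℕ => Real.log n / n)
    (hp : ∀ n : ℕ, p n = c * Real.log n / n + ξ n)
    (hG : ∀ n : ℕ, IsInfOrderedRandomGraph (μ n) (edge n) (p n))
    (t : ℕ → ℕ)
    (ht : ∀ n : ℕ, t n = ⌊(n : ℝ) ^ c * Real.exp (-(n * |ξ n|) - Real.log (Real.log n))⌋₊) :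
    Tendsto (fun n : ℕ => μ n {ω | Xr (edge n) ω (t n) < n}) atTop (nhds 1) ∧
    Tendsto (fun n : ℕ => μ n {ω | t n ≤ reachCount (edge n) ω n}) atTop (nhds 1) ∧
    Tendsto (fun n : ℕ => Real.log (t n) / Real.log n) atTop (nhds c) := by
  have := fun n => (hG n).isProb
  have ht' : ∀ n, t n = ⌊threshold c ξ n⌋₊ := ht
  have hbad := eventually_measure_reachCount_pred_le hc0 hc1 hξ hp hG ht'
  refine ⟨tendsto_measure_of_measure_compl_le tendsto_exp_neg_log_log_div_two ?_,
    tendsto_measure_of_measure_compl_le tendsto_exp_neg_log_log_div_two ?_, ?_⟩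
  · filter_upwards [hbad, eventually_ge_atTop 1] with n hn hn1
    refine (measure_mono fun ω hω => ?_).trans hn
    simp only [Set.mem_compl_iff, Set.mem_ofPred_eq, not_lt] at hω ⊢
    by_contra! h
    exact absurd (Xr_le_of_lt_reachCount h) (by omega)
  · filter_upwards [hbad] with n hn
    refine (measure_mono fun ω hω => ?_).trans hn
    simp only [Set.mem_compl_iff, Set.mem_ofPred_eq, not_le] at hω ⊢
    exact (reachCount_mono ω (Nat.sub_le n 1)).trans hω.le
  · simpa only [ht'] using tendsto_log_natFloor_div hc0 tendsto_log_natCast_atTop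
      ((eventually_ge_atTop 1).mono fun _ => threshold_pos c ξ) (tendsto_log_threshold_div_log hξ)
end

section
/- Suppose p = p(n) = c·(log n)/n + ξ(n) where ξ(n) = o((log n)/n) and c > 1 is fixed, and let t = t(n) = ⌊n·(log log n)/(log n)⌋. Then for every ε > 0, the probability that the number of indices j with X_t < j ≤ n such that v_j is NOT reachable from v_1 is at most ε·n tends to 1 as n → ∞. -/
/-!
Fix a vertex `m`. The set `R` of reachable vertices below `m` depends only on the edges inside
`{0, …, m-1}`, which are independent of the `|R|` edges from `R` to `m`, and `m` is unreachable
exactly when none of the latter is present. Summing over `R`, the probability that `m` is unreachable while at least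
`t + 1` earlier vertices are reachable is at most `(1 - p)^(t+1)`.

By the second Borel–Cantelli lemma `v_1` almost surely has infinitely many out-neighbours, and
then every unreachable `v_j` with `j > X_t` has at least `t + 1` reachable predecessors (`v_1` and
the first `t` reachable vertices). Markov's inequality bounds the probability of more than `ε n`
such `j ≤ n` by `(1 - p)^(t+1) / ε ≤ exp (-p (t + 1)) / ε`, and `p (t + 1) ≥ log log n → ∞` since
`p ≥ log n / n` eventually (this is where `c > 1` enters).
-/

open MeasureTheory ProbabilityTheory Filter

-- `unreachedCount edge ω m n` is the number of (1-based) indices `j` with `m < j ≤ n` such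
-- that `v_j` is NOT reachable from `v_1` (vertex `v_j` is `j - 1` in 0-based labelling).
open Classical in
noncomputable def unreachedCount {Ω : Type*} (edge : ℕ → ℕ → Ω → Bool) (ω : Ω)
    (m n : ℕ) : ℕ :=
  ((Finset.Ioc m n).filter fun j => ¬ ReachableI edge ω (j - 1)).card

open Finset
open scoped ENNReal Topology

section Reachability

variable {Ω : Type*} {edge : ℕ → ℕ → Ω → Bool} {ω ω' : Ω}

theorem ReachableI.of_edge_eq_below {M k : ℕ}
    (h : ∀ a b, a < b → b < M → edge a b ω = edge a b ω') (hk : k < M)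
    (hr : ReachableI edge ω k) : ReachableI edge ω' k := by
  induction hr with
  | refl => exact .refl
  | @tail b c _ hbc ih => exact (ih (hbc.1.trans hk)).tail ⟨hbc.1, h b c hbc.1 hk ▸ hbc.2⟩

theorem reachableI_congr {M k : ℕ} (h : ∀ a b, a < b → b < M → edge a b ω = edge a b ω')
    (hk : k < M) : ReachableI edge ω k ↔ ReachableI edge ω' k :=
  ⟨.of_edge_eq_below h hk, .of_edge_eq_below (fun a b hab hb => (h a b hab hb).symm) hk⟩

open Classical in
noncomputable def reachableBelow (edge : ℕ → ℕ → Ω → Bool) (ω : Ω) (m : ℕ) : Finset ℕ :=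
  {k ∈ range m | ReachableI edge ω k}

theorem mem_reachableBelow {m k : ℕ} :
    k ∈ reachableBelow edge ω m ↔ k < m ∧ ReachableI edge ω k := by
  simp [reachableBelow]

theorem reachableBelow_subset_range {m : ℕ} : reachableBelow edge ω m ⊆ range m := by
  classical exact filter_subset _ _

theorem reachableBelow_congr {M m : ℕ} (h : ∀ a b, a < b → b < M → edge a b ω = edge a b ω')
    (hm : m ≤ M) : reachableBelow edge ω m = reachableBelow edge ω' m := by
  ext k
  simp only [mem_reachableBelow]
  exact and_congr_right fun hk => reachableI_congr h (hk.trans_le hm)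

def missedAfter (edge : ℕ → ℕ → Ω → Bool) (t m : ℕ) : Set Ω :=
  {ω | t + 1 ≤ #(reachableBelow edge ω m) ∧ ¬ ReachableI edge ω m}

theorem succ_le_card_reachableBelow (hinf : {j | 0 < j ∧ ReachableI edge ω j}.Infinite)
    {t m : ℕ} (hm : Xr edge ω t ≤ m) : t + 1 ≤ #(reachableBelow edge ω m) := by
  cases t with
  | zero =>
    exact card_pos.2 ⟨0, mem_reachableBelow.2 ⟨hm, .refl⟩⟩
  | succ s =>
    set Q := fun j => 0 < j ∧ ReachableI edge ω j
    have hmono : StrictMono (Nat.nth Q) := Nat.nth_strictMono hinf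
    have hQ (i : ℕ) : Q (Nat.nth Q i) := Nat.nth_mem_of_infinite hinf i
    have hXr : Xr edge ω (s + 1) = Nat.nth Q s + 1 := rfl
    have hsub : insert 0 ((range (s + 1)).image (Nat.nth Q)) ⊆ reachableBelow edge ω m := by
      simp only [insert_subset_iff, image_subset_iff, mem_range, mem_reachableBelow]
      refine ⟨⟨by omega, .refl⟩, fun i hi => ⟨?_, (hQ i).2⟩⟩
      have := hmono.monotone (Nat.le_of_lt_succ hi)
      omega
    have h0 : 0 ∉ (range (s + 1)).image (Nat.nth Q) := by
      simp only [mem_image, not_exists, not_and]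
      exact fun i _ h => (hQ i).1.ne' h
    simpa [card_insert_of_notMem h0, card_image_of_injective _ hmono.injective]
      using card_le_card hsub

open Classical in
theorem unreachedCount_le_card_missedAfter
    (hinf : {j | 0 < j ∧ ReachableI edge ω j}.Infinite) (t n : ℕ) :
    unreachedCount edge ω (Xr edge ω t) n ≤ #{m ∈ range n | ω ∈ missedAfter edge t m} := by
  refine card_le_card_of_injOn (· - 1) (fun j hj => ?_) (fun i hi j hj hij => ?_)
  · simp only [coe_filter, mem_Ioc, Set.mem_ofPred_eq] at hj
    rw [mem_coe, mem_filter, mem_range]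
    dsimp only
    exact ⟨by omega, succ_le_card_reachableBelow hinf (by omega), hj.2⟩
  · simp only [coe_filter, mem_Ioc, Set.mem_ofPred_eq] at hi hj
    simp only at hij
    omega

end Reachability

section EdgeSets

abbrev OrderedPair : Type := {q : ℕ × ℕ // q.1 < q.2}

variable {Ω : Type*} {edge : ℕ → ℕ → Ω → Bool}

def pairsBelow (M : ℕ) : Finset OrderedPair :=
  (range M ×ˢ range M).subtype fun q => q.1 < q.2

def pairsInto (R : Finset ℕ) (m : ℕ) : Finset OrderedPair :=
  (R.image fun r => (r, m)).subtype fun q => q.1 < q.2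

theorem mem_pairsBelow {M : ℕ} {e : OrderedPair} :
    e ∈ pairsBelow M ↔ e.1.2 < M := by
  have := e.2
  simp only [pairsBelow, mem_subtype, mem_product, mem_range]
  omega

theorem mem_pairsInto {R : Finset ℕ} {m : ℕ} {e : OrderedPair} :
    e ∈ pairsInto R m ↔ e.1.1 ∈ R ∧ e.1.2 = m := by
  obtain ⟨⟨a, b⟩, _⟩ := e
  simp [pairsInto, eq_comm]

theorem disjoint_pairsBelow_pairsInto (R : Finset ℕ) (m : ℕ) :
    Disjoint (pairsBelow m) (pairsInto R m) :=
  disjoint_left.2 fun _ hS hT => (mem_pairsBelow.1 hS).ne (mem_pairsInto.1 hT).2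

theorem card_pairsInto {R : Finset ℕ} {m : ℕ} (hR : R ⊆ range m) : #(pairsInto R m) = #R := by
  rw [pairsInto, card_subtype, filter_true_of_mem, card_image_of_injective _ fun a b h => by
    simpa using h]
  simp only [mem_image, forall_exists_index, and_imp]
  rintro _ r hr rfl
  exact mem_range.1 (hR hr)

def IsDeterminedBy (edge : ℕ → ℕ → Ω → Bool) (S : Finset OrderedPair)
    (A : Set Ω) : Prop :=
  ∀ ⦃ω ω'⦄, (∀ e ∈ S, edge e.1.1 e.1.2 ω = edge e.1.1 e.1.2 ω') → ω ∈ A → ω' ∈ A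

theorem isDeterminedBy_pairsBelow {M : ℕ} {A : Set Ω}
    (hA : ∀ ⦃ω ω'⦄, (∀ a b, a < b → b < M → edge a b ω = edge a b ω') → ω ∈ A → ω' ∈ A) :
    IsDeterminedBy edge (pairsBelow M) A :=
  fun _ _ h => hA fun a b hab hb => h ⟨(a, b), hab⟩ (mem_pairsBelow.2 hb)

theorem isDeterminedBy_missedAfter (t m : ℕ) :
    IsDeterminedBy edge (pairsBelow (m + 1)) (missedAfter edge t m) :=
  isDeterminedBy_pairsBelow fun _ _ h hω => by
    rwa [missedAfter, Set.mem_ofPred_eq, ← reachableBelow_congr h m.le_succ,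
      ← reachableI_congr h m.lt_succ_self]

theorem IsDeterminedBy.preimage_image {S : Finset OrderedPair} {A : Set Ω}
    (hA : IsDeterminedBy edge S A) :
    (fun ω (e : S) => edge e.1.1.1 e.1.1.2 ω) ⁻¹'
      ((fun ω (e : S) => edge e.1.1.1 e.1.1.2 ω) '' A) = A := by
  refine subset_antisymm ?_ (Set.subset_preimage_image _ _)
  rintro ω ⟨ω', hω', h⟩
  exact hA (fun e he => congrFun h ⟨e, he⟩) hω'

theorem IsDeterminedBy.measurableSet [MeasurableSpace Ω] {S : Finset OrderedPair}
    {A : Set Ω} (hmeas : ∀ a b, Measurable (edge a b)) (hA : IsDeterminedBy edge S A) :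
    MeasurableSet A := by
  rw [← hA.preimage_image]
  exact measurable_pi_lambda _ (fun e => hmeas _ _) (Set.toFinite _).measurableSet

end EdgeSets

section Markov

variable {Ω : Type*} [MeasurableSpace Ω] {μ : Measure Ω}

open Classical in
theorem meas_le_card_filter_mem_le {ι : Type*} (s : Finset ι) {G : ι → Set Ω}
    (hG : ∀ i, MeasurableSet (G i)) {a : ℝ≥0∞} (ha₀ : a ≠ 0) (ha : a ≠ ⊤) :
    μ {ω | a ≤ #{i ∈ s | ω ∈ G i}} ≤ (∑ i ∈ s, μ (G i)) / a := by
  have hcount : (fun ω => (#{i ∈ s | ω ∈ G i} : ℝ≥0∞))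
      = fun ω => ∑ i ∈ s, (G i).indicator 1 ω := by
    ext ω
    rw [card_filter, Nat.cast_sum]
    exact sum_congr rfl fun i _ => by by_cases h : ω ∈ G i <;> simp [h]
  have hmeas : Measurable fun ω => (#{i ∈ s | ω ∈ G i} : ℝ≥0∞) := by
    rw [hcount]
    exact Finset.measurable_sum _ fun i _ => measurable_one.indicator (hG i)
  refine (meas_ge_le_lintegral_div hmeas.aemeasurable ha₀ ha).trans_eq ?_
  rw [hcount, lintegral_finsetSum _ fun i _ => measurable_one.indicator (hG i)]
  simp_rw [lintegral_indicator_one (hG _)]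

end Markov

namespace IsInfOrderedRandomGraph

variable {Ω : Type*} [MeasurableSpace Ω] {μ : Measure Ω} {edge : ℕ → ℕ → Ω → Bool} {p : ℝ}

theorem le_one (hG : IsInfOrderedRandomGraph μ edge p) : p ≤ 1 := by
  have := hG.isProb
  rw [← ENNReal.ofReal_le_one, ← hG.marginal 0 1 one_pos]
  exact prob_le_one

theorem measure_inter_of_isDeterminedBy (hG : IsInfOrderedRandomGraph μ edge p)
    {S T : Finset OrderedPair} {A B : Set Ω} (hST : Disjoint S T)
    (hA : IsDeterminedBy edge S A) (hB : IsDeterminedBy edge T B) : μ (A ∩ B) = μ A * μ B := by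
  rw [← hA.preimage_image, ← hB.preimage_image]
  exact (hG.indep.indepFun_finset S T hST fun _ => hG.meas _ _).measure_inter_preimage_eq_mul
    _ _ (Set.toFinite _).measurableSet (Set.toFinite _).measurableSet

theorem measure_edge_false (hG : IsInfOrderedRandomGraph μ edge p) {a b : ℕ} (hab : a < b) :
    μ {ω | edge a b ω = false} = 1 - ENNReal.ofReal p := by
  have := hG.isProb
  have hcompl : {ω | edge a b ω = false} = (edge a b ⁻¹' {true})ᶜ := by ext; simp
  rw [hcompl, prob_compl_eq_one_sub (hG.meas a b (measurableSet_singleton true)),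
    ← hG.marginal a b hab]
  rfl

theorem measure_forall_edge_false (hG : IsInfOrderedRandomGraph μ edge p)
    (S : Finset OrderedPair) :
    μ {ω | ∀ e ∈ S, edge e.1.1 e.1.2 ω = false} = (1 - ENNReal.ofReal p) ^ #S := by
  have hinter : {ω | ∀ e ∈ S, edge e.1.1 e.1.2 ω = false}
      = ⋂ e ∈ S, {ω | edge e.1.1 e.1.2 ω = false} := by
    ext; simp
  rw [hinter, hG.indep.meas_biInter (s := fun e => {ω | edge e.1.1 e.1.2 ω = false})
      fun _ _ => ⟨{false}, measurableSet_singleton false, rfl⟩,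
    prod_congr rfl fun e _ => hG.measure_edge_false e.2, prod_const]

theorem measure_missedAfter_le (hG : IsInfOrderedRandomGraph μ edge p) (t m : ℕ) :
    μ (missedAfter edge t m) ≤ (1 - ENNReal.ofReal p) ^ (t + 1) := by
  have := hG.isProb
  set P := (range m).powerset.filter fun R => t + 1 ≤ #R
  set E : Finset ℕ → Set Ω := fun R => {ω | reachableBelow edge ω m = R}
  set N : Finset ℕ → Set Ω := fun R => {ω | ∀ e ∈ pairsInto R m, edge e.1.1 e.1.2 ω = false}
  have hcover : missedAfter edge t m ⊆ ⋃ R ∈ P, E R ∩ N R := by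
    rintro ω ⟨hcard, hω⟩
    refine Set.mem_biUnion (x := reachableBelow edge ω m)
      (mem_filter.2 ⟨mem_powerset.2 reachableBelow_subset_range, hcard⟩) ⟨rfl, fun e he => ?_⟩
    obtain ⟨hr, he⟩ := mem_pairsInto.1 he
    refine Bool.eq_false_iff.2 fun htrue => hω ?_
    exact he ▸ (mem_reachableBelow.1 hr).2.tail ⟨he ▸ e.2, htrue⟩
  have hE (R : Finset ℕ) : IsDeterminedBy edge (pairsBelow m) (E R) :=
    isDeterminedBy_pairsBelow fun _ _ h hω => (reachableBelow_congr h le_rfl).symm.trans hω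
  have hN (R : Finset ℕ) : IsDeterminedBy edge (pairsInto R m) (N R) :=
    fun _ _ h hω e he => (h e he).symm.trans (hω e he)
  have hNle : ∀ R ∈ P, μ (N R) ≤ (1 - ENNReal.ofReal p) ^ (t + 1) := by
    intro R hR
    obtain ⟨hRm, hRt⟩ := mem_filter.1 hR
    rw [hG.measure_forall_edge_false, card_pairsInto (mem_powerset.1 hRm)]
    exact pow_le_pow_of_le_one zero_le tsub_le_self hRt
  have hEdisj : (P : Set (Finset ℕ)).PairwiseDisjoint E :=
    fun _ _ _ _ hne => Set.disjoint_left.2 fun _ h₁ h₂ => hne (h₁.symm.trans h₂)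
  calc μ (missedAfter edge t m) ≤ ∑ R ∈ P, μ (E R ∩ N R) :=
        (measure_mono hcover).trans (measure_biUnion_finset_le _ _)
    _ = ∑ R ∈ P, μ (E R) * μ (N R) := sum_congr rfl fun R _ =>
        hG.measure_inter_of_isDeterminedBy (disjoint_pairsBelow_pairsInto R m) (hE R) (hN R)
    _ ≤ ∑ R ∈ P, μ (E R) * (1 - ENNReal.ofReal p) ^ (t + 1) :=
        sum_le_sum fun R hR => mul_le_mul_right (hNle R hR) _
    _ = μ (⋃ R ∈ P, E R) * (1 - ENNReal.ofReal p) ^ (t + 1) := by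
        rw [← sum_mul, measure_biUnion_finset hEdisj fun R _ => (hE R).measurableSet hG.meas]
    _ ≤ (1 - ENNReal.ofReal p) ^ (t + 1) := mul_le_of_le_one_left' prob_le_one

theorem ae_infinite_reachableI (hG : IsInfOrderedRandomGraph μ edge p) (hp : 0 < p) :
    ∀ᵐ ω ∂μ, {j | 0 < j ∧ ReachableI edge ω j}.Infinite := by
  set s : ℕ → Set Ω := fun i => {ω | edge 0 (i + 1) ω = true}
  have hs (i : ℕ) : MeasurableSet (s i) := hG.meas 0 (i + 1) (measurableSet_singleton true)
  have hind : iIndepSet s μ := by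
    rw [iIndepSet_iff_meas_biInter hs]
    intro S
    exact (hG.indep.precomp (g := fun i : ℕ => ⟨(0, i + 1), i.succ_pos⟩)
      fun i j h => by simpa using h).meas_biInter
        fun _ _ => ⟨{true}, measurableSet_singleton true, rfl⟩
  have hsum : ∑' i, μ (s i) = ⊤ := by
    simp only [s, hG.marginal 0 _ (Nat.succ_pos _)]
    exact ENNReal.tsum_const_eq_top_of_ne_zero (by simpa using hp)
  have := hG.isProb
  filter_upwards [(mem_ae_iff_prob_eq_one (MeasurableSet.measurableSet_limsup hs)).2
    (measure_limsup_eq_one hs hind hsum)] with ω hω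
  have hfreq := Nat.frequently_atTop_iff_infinite.1 (mem_limsup_iff_frequently_mem.1 hω)
  refine (hfreq.image Nat.succ_injective.injOn).mono ?_
  rintro _ ⟨i, hi, rfl⟩
  exact ⟨i.succ_pos, .single ⟨i.succ_pos, hi⟩⟩

theorem measure_lt_unreachedCount_le (hG : IsInfOrderedRandomGraph μ edge p)
    (hp : 0 < p) (t n : ℕ) {a : ℝ} (ha : 0 < a) :
    μ {ω | a < unreachedCount edge ω (Xr edge ω t) n}
      ≤ ENNReal.ofReal (n * (1 - p) ^ (t + 1) / a) := by
  classical
  have hbad : {ω | a < unreachedCount edge ω (Xr edge ω t) n}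
      ≤ᵐ[μ] {ω | ENNReal.ofReal a ≤ #{m ∈ range n | ω ∈ missedAfter edge t m}} := by
    filter_upwards [hG.ae_infinite_reachableI hp] with ω hinf hω
    have hcount : (unreachedCount edge ω (Xr edge ω t) n : ℝ)
        ≤ #{m ∈ range n | ω ∈ missedAfter edge t m} := by
      exact_mod_cast unreachedCount_le_card_missedAfter hinf t n
    exact (ENNReal.ofReal_le_ofReal (hω.le.trans hcount)).trans_eq (ENNReal.ofReal_natCast _)
  calc μ {ω | a < unreachedCount edge ω (Xr edge ω t) n}
      ≤ (∑ m ∈ range n, μ (missedAfter edge t m)) / ENNReal.ofReal a :=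
        (measure_mono_ae hbad).trans <| meas_le_card_filter_mem_le _
          (fun m => (isDeterminedBy_missedAfter t m).measurableSet hG.meas)
          (by simpa using ha) ENNReal.ofReal_ne_top
    _ ≤ n * (1 - ENNReal.ofReal p) ^ (t + 1) / ENNReal.ofReal a := by
        gcongr
        simpa using sum_le_card_nsmul (range n) _ _ fun m _ => hG.measure_missedAfter_le t m
    _ = ENNReal.ofReal (n * (1 - p) ^ (t + 1) / a) := by
        rw [ENNReal.ofReal_div_of_pos ha, ENNReal.ofReal_mul (by positivity),
          ENNReal.ofReal_natCast, ENNReal.ofReal_pow (by linarith [hG.le_one]),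
          ENNReal.ofReal_sub _ hp.le, ENNReal.ofReal_one]

end IsInfOrderedRandomGraph

theorem tendsto_measure_of_tendsto_measure_compl {ι : Type*} {l : Filter ι} {Ω : ι → Type*}
    [∀ i, MeasurableSpace (Ω i)] {μ : ∀ i, Measure (Ω i)} [∀ i, IsProbabilityMeasure (μ i)]
    {s : ∀ i, Set (Ω i)} (h : Tendsto (fun i => μ i (s i)ᶜ) l (𝓝 0)) :
    Tendsto (fun i => μ i (s i)) l (𝓝 1) := by
  have hlow : Tendsto (fun i => 1 - μ i (s i)ᶜ) l (𝓝 1) := by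
    simpa using ENNReal.Tendsto.sub tendsto_const_nhds h (Or.inl ENNReal.one_ne_top)
  refine tendsto_of_tendsto_of_tendsto_of_le_of_le hlow tendsto_const_nhds (fun i => ?_)
    fun i => prob_le_one
  rw [tsub_le_iff_right, ← measure_univ (μ := μ i)]
  exact measure_univ_le_add_compl _

theorem tendsto_one_sub_pow_of_tendsto_mul_atTop {ι : Type*} {l : Filter ι} {q : ι → ℝ}
    {k : ι → ℕ} (hq : ∀ i, q i ≤ 1) (hqk : Tendsto (fun i => q i * k i) l atTop) :
    Tendsto (fun i => (1 - q i) ^ k i) l (𝓝 0) := by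
  refine squeeze_zero (fun i => pow_nonneg (sub_nonneg.2 (hq i)) _) (fun i => ?_)
    (Real.tendsto_exp_neg_atTop_nhds_zero.comp hqk)
  calc (1 - q i) ^ k i ≤ Real.exp (-q i) ^ k i :=
        pow_le_pow_left₀ (sub_nonneg.2 (hq i)) (Real.one_sub_le_exp_neg _) _
    _ = Real.exp (-(q i * k i)) := by rw [← Real.exp_nat_mul]; ring_nf

theorem Asymptotics.IsLittleO.eventually_le_const_mul_add {α : Type*} {l : Filter α}
    {f ξ : α → ℝ} {c : ℝ} (hξ : ξ =o[l] f) (hc : 1 < c) (hf : ∀ᶠ x in l, 0 ≤ f x) :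
    ∀ᶠ x in l, f x ≤ c * f x + ξ x := by
  filter_upwards [hξ.def (sub_pos.2 hc), hf] with x hx hfx
  rw [Real.norm_eq_abs, Real.norm_of_nonneg hfx] at hx
  linarith [neg_abs_le (ξ x)]

theorem tendsto_log_div_mul_floor_atTop :
    Tendsto (fun n : ℕ => Real.log n / n *
      ((⌊(n : ℝ) * Real.log (Real.log n) / Real.log n⌋₊ + 1 : ℕ) : ℝ)) atTop atTop := by
  refine tendsto_atTop_mono' _ ?_ ((Real.tendsto_log_atTop.comp Real.tendsto_log_atTop).comp
    tendsto_natCast_atTop_atTop)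
  filter_upwards [eventually_gt_atTop 1] with n hn
  have hn : (1 : ℝ) < n := by exact_mod_cast hn
  have hlog : 0 < Real.log n := Real.log_pos hn
  calc Real.log (Real.log n)
      = Real.log n / n * ((n : ℝ) * Real.log (Real.log n) / Real.log n) := by
        field_simp
    _ ≤ _ := by
        push_cast
        exact mul_le_mul_of_nonneg_left (Nat.lt_floor_add_one _).le (by positivity)

open Asymptotics in
/-- Suppose `p n = c·(log n)/n + ξ n` with `ξ = o((log n)/n)` and `c > 1`
fixed, and let `t n = ⌊n·(log log n)/(log n)⌋`.  Then for every `ε > 0`, the probability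
that the number of indices `j` with `X_{t n} < j ≤ n` such that `v_j` is not reachable from
`v_1` is at most `ε·n` tends to `1` as `n → ∞`. -/
theorem unreached_above_X_t_aas {Ω : ℕ → Type*} [∀ n, MeasurableSpace (Ω n)]
    (μ : ∀ n, Measure (Ω n)) (edge : ∀ n, ℕ → ℕ → Ω n → Bool)
    (c : ℝ) (hc : 1 < c) (p ξ : ℕ → ℝ)
    (hξ : ξ =o[atTop] fun n : ℕ => Real.log n / n)
    (hp : ∀ n : ℕ, p n = c * Real.log n / n + ξ n)
    (hG : ∀ n : ℕ, IsInfOrderedRandomGraph (μ n) (edge n) (p n))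
    (t : ℕ → ℕ) (ht : ∀ n : ℕ, t n = ⌊(n : ℝ) * Real.log (Real.log n) / Real.log n⌋₊)
    (ε : ℝ) (hε : 0 < ε) :
    Tendsto (fun n : ℕ => μ n
        {ω | (unreachedCount (edge n) ω (Xr (edge n) ω (t n)) n : ℝ) ≤ ε * n})
      atTop (nhds 1) := by
  have := fun n => (hG n).isProb
  have hlog_le : ∀ᶠ n : ℕ in atTop, Real.log n / n ≤ p n := by
    filter_upwards [hξ.eventually_le_const_mul_add hc (.of_forall fun n => by positivity)]
      with n hn
    rwa [hp, mul_div_assoc]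
  have hp_pos : ∀ᶠ n : ℕ in atTop, 0 < p n := by
    filter_upwards [hlog_le, eventually_gt_atTop 1] with n hn hn1
    exact (div_pos (Real.log_pos (by exact_mod_cast hn1)) (by positivity)).trans_le hn
  have hpt : Tendsto (fun n => p n * ((t n + 1 : ℕ) : ℝ)) atTop atTop := by
    obtain rfl : t = _ := funext ht
    exact tendsto_atTop_mono' _ (hlog_le.mono fun n hn =>
      mul_le_mul_of_nonneg_right hn (Nat.cast_nonneg _)) tendsto_log_div_mul_floor_atTop
  have hbound : Tendsto (fun n => ENNReal.ofReal ((1 - p n) ^ (t n + 1) / ε)) atTop (𝓝 0) := by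
    simpa using ENNReal.tendsto_ofReal
      ((tendsto_one_sub_pow_of_tendsto_mul_atTop (fun n => (hG n).le_one) hpt).div_const ε)
  refine tendsto_measure_of_tendsto_measure_compl <| tendsto_of_tendsto_of_tendsto_of_le_of_le'
    tendsto_const_nhds hbound (.of_forall fun _ => zero_le) ?_
  filter_upwards [hp_pos, eventually_gt_atTop 0] with n hpn hn
  have hεn : 0 < ε * n := by positivity
  calc _ = μ n {ω | ε * n < unreachedCount (edge n) ω (Xr (edge n) ω (t n)) n} := by
        simp only [Set.compl_ofPred, not_le]
    _ ≤ ENNReal.ofReal (n * (1 - p n) ^ (t n + 1) / (ε * n)) :=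
        (hG n).measure_lt_unreachedCount_le hpn _ _ hεn
    _ = ENNReal.ofReal ((1 - p n) ^ (t n + 1) / ε) := by
        congr 1
        field_simp
end
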